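/- Let E be a number field, A a finite-dimensional semisimple E-algebra, 𝒜 an O_E-order of full rank in A, and ℳ a maximal O_E-order in A containing 𝒜. Let X be an 𝒜-lattice (a left 𝒜-module finitely generated and torsion-free over O_E). Then X is free of rank d over 𝒜 if and only if (a) X is locally free of rank d over 𝒜 (i.e., X_𝔭 is free of rank d over 𝒜_𝔭 for every nonzero prime 𝔭 of O_E), and (b) there exist α₁,…,α_d ∈ X such that ℳX = ℳα₁ ⊕ … ⊕ ℳα_d. Moreover, when (a) and (b) hold, X = 𝒜α₁ ⊕ … ⊕ 𝒜α_d. -/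

import Mathlib

open scoped NumberField

section

variable (E : Type*) [Field E] [NumberField E]
variable (A : Type*) [Ring A] [Algebra E A]

/-- The ring of integers of `E` acts on any `E`-algebra `A`. -/
noncomputable instance algebraOEA : Algebra (𝓞 E) A :=
  RingHom.toAlgebra' ((algebraMap E A).comp (algebraMap (𝓞 E) E))
    (fun c x => by
      simpa only [RingHom.comp_apply] using (Algebra.commutes (algebraMap (𝓞 E) E c) x))

variable (V : Type*) [AddCommGroup V] [Module E V] [Module A V] [IsScalarTower E A V]

/-- The ring of integers of `E` acts on any `E`-vector space. -/
noncomputable instance (priority := 50) moduleOEV {E : Type*} [Field E] [NumberField E]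
    (W : Type*) [AddCommGroup W] [Module E W] : Module (𝓞 E) W :=
  Module.compHom W (algebraMap (𝓞 E) E)

variable {E A V}

/-- An `𝓞 E`-order of full rank in `A`: a subalgebra which is a finitely generated
`𝓞 E`-module spanning `A` over `E`. -/
def IsOrder (𝒜 : Subalgebra (𝓞 E) A) : Prop :=
  (Subalgebra.toSubmodule 𝒜).FG ∧ Submodule.span E (𝒜 : Set A) = ⊤

/-- A maximal `𝓞 E`-order in `A`. -/
def IsMaximalOrder (ℳ : Subalgebra (𝓞 E) A) : Prop :=
  IsOrder ℳ ∧ ∀ ℳ' : Subalgebra (𝓞 E) A, IsOrder ℳ' → ℳ ≤ ℳ' → ℳ' = ℳ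

/-- An `𝒜`-lattice: an `𝓞 E`-submodule of an `A`-module `V` which is finitely generated
and torsion-free over `𝓞 E` and stable under the order `𝒜`. -/
def IsALattice (𝒜 : Subalgebra (𝓞 E) A) (X : Submodule (𝓞 E) V) : Prop :=
  X.FG ∧ (∀ (r : 𝓞 E) (x : V), x ∈ X → r • x = 0 → r = 0 ∨ x = 0) ∧
    ∀ a ∈ 𝒜, ∀ x ∈ X, a • x ∈ X

/-- `α : Fin d → V` is a free basis of the set `Y ⊆ V` over the set of scalars `S ⊆ A`,
i.e. `Y = S•α 1 ⊕ ⋯ ⊕ S•α d` with the summands free. -/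
def IsBasisOf {d : ℕ} (S : Set A) (Y : Set V) (α : Fin d → V) : Prop :=
  (∀ lam : Fin d → A, (∀ i, lam i ∈ S) → ∑ i, lam i • α i ∈ Y) ∧
  (∀ y ∈ Y, ∃ lam : Fin d → A, (∀ i, lam i ∈ S) ∧ y = ∑ i, lam i • α i) ∧
  (∀ lam : Fin d → A, (∀ i, lam i ∈ S) → ∑ i, lam i • α i = 0 → ∀ i, lam i = 0)

/-- `Y` is a free module of rank `d` over the set of scalars `S ⊆ A`. -/
def IsFreeOfRank (S : Set A) (Y : Set V) (d : ℕ) : Prop :=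
  ∃ α : Fin d → V, (∀ i, α i ∈ Y) ∧ IsBasisOf S Y α

/-- Localization at the prime `𝔭` of a subset of `A`, inside `A`. -/
def localizeA (𝔭 : Ideal (𝓞 E)) (S : Set A) : Set A :=
  {a | ∃ s : 𝓞 E, s ∉ 𝔭 ∧ s • a ∈ S}

/-- Localization at the prime `𝔭` of a subset of `V`, inside `V`. -/
def localizeV (𝔭 : Ideal (𝓞 E)) (Y : Set V) : Set V :=
  {v | ∃ s : 𝓞 E, s ∉ 𝔭 ∧ s • v ∈ Y}

/-- `Y` is locally free of rank `d` over the order (given as the set `S`): at every nonzero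
prime `𝔭` of `𝓞 E` the localization `Y_𝔭` is free of rank `d` over `S_𝔭`. -/
def IsLocallyFreeOfRank (S : Set A) (Y : Set V) (d : ℕ) : Prop :=
  ∀ 𝔭 : Ideal (𝓞 E), 𝔭.IsPrime → 𝔭 ≠ ⊥ →
    IsFreeOfRank (localizeA 𝔭 S) (localizeV 𝔭 Y) d

/-- The `S`-span `S·Y` of a subset `Y ⊆ V`, for a set of scalars `S ⊆ A`:
all finite sums `∑ λᵢ • xᵢ` with `λᵢ ∈ S`, `xᵢ ∈ Y`. -/
def spanSet (S : Set A) (Y : Set V) : Set V :=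
  {v | ∃ (m : ℕ) (lam : Fin m → A) (x : Fin m → V),
    (∀ i, lam i ∈ S) ∧ (∀ i, x i ∈ Y) ∧ v = ∑ i, lam i • x i}

/-!
Only the converse direction has substance. Let `α ∈ Xᵈ` be an `ℳ`-basis of `ℳX` and, at a prime
`𝔭`, let `β` be an `𝒜_𝔭`-basis of `X_𝔭`. Writing `α = Mβ` and `β = Nα` gives a matrix `M` over
`𝒜_𝔭` and a matrix `N` over `ℳ_𝔭` with `MN = 1`. Choose `r ≠ 0` with `rℳ ⊆ 𝒜`; then `ℳ/rℳ` is
finite, so for `P = uM` over `𝒜` (with `u ∉ 𝔭`) two powers `Pᵃ, Pᵇ`, `a < b`, agree modulo `rℳ`.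
Multiplying by `Nᵃ⁺¹` gives `uᵃN ≡ uᵇMᵇ⁻ᵃ⁻¹` modulo `r ℳ_𝔭 ⊆ 𝒜_𝔭`, so `N` is a matrix over `𝒜_𝔭`.
Hence the `α`-coordinates of any `x ∈ X` lie in every `𝒜_𝔭`, that is, in `𝒜`.
-/

namespace Submodule

variable {R M : Type*} [CommRing R] [AddCommGroup M] [Module R M]

theorem exists_smul_mem_of_forall (N : Submodule R M) (T : Submonoid R) {ι : Type*} [Finite ι]
    (v : ι → M) (h : ∀ i, ∃ t ∈ T, t • v i ∈ N) : ∃ t ∈ T, ∀ i, t • v i ∈ N := by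
  classical
  have := Fintype.ofFinite ι
  choose t ht hv using h
  refine ⟨∏ i, t i, prod_mem fun i _ => ht i, fun i => ?_⟩
  rw [← Finset.prod_erase_mul _ _ (Finset.mem_univ i), mul_smul]
  exact N.smul_mem _ (hv i)

theorem FG.exists_smul_mem_of_forall {N : Submodule R M} (hN : N.FG) (P : Submodule R M)
    (T : Submonoid R) (h : ∀ x ∈ N, ∃ t ∈ T, t • x ∈ P) : ∃ t ∈ T, ∀ x ∈ N, t • x ∈ P := by
  obtain ⟨s, rfl⟩ := hN
  obtain ⟨t, ht, hs⟩ := P.exists_smul_mem_of_forall T (fun x : s => (x : M))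
    fun x => h x (subset_span x.2)
  refine ⟨t, ht, fun x hx => ?_⟩
  have hle : span R (s : Set M) ≤ P.comap (t • LinearMap.id) :=
    span_le.mpr fun x hx => hs ⟨x, hx⟩
  simpa using hle hx

theorem mem_of_forall_isMaximal {N : Submodule R M} {x : M}
    (h : ∀ 𝔪 : Ideal R, 𝔪.IsMaximal → ∃ s ∉ 𝔪, s • x ∈ N) : x ∈ N := by
  by_contra hx
  have hcolon : N.colon {x} ≠ ⊤ := fun htop =>
    hx (by simpa using mem_colon_singleton.mp (htop ▸ mem_top : (1 : R) ∈ N.colon {x}))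
  obtain ⟨𝔪, h𝔪, hle⟩ := Ideal.exists_le_maximal _ hcolon
  obtain ⟨s, hs, hsx⟩ := h 𝔪 h𝔪
  exact hs (hle (mem_colon_singleton.mpr hsx))

theorem FG.exists_lt_sub_eq_smul {N : Submodule R M} (hN : N.FG) {r : R}
    [Finite (R ⧸ Ideal.span {r})] (f : ℕ → M) (hf : ∀ k, f k ∈ N) :
    ∃ a b, a < b ∧ ∃ c ∈ N, f b - f a = r • c := by
  have : Module.Finite R N := .of_fg hN
  have : Finite (N ⧸ Ideal.span {r} • (⊤ : Submodule R N)) :=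
    finite_quotient_smul _ Module.Finite.fg_top
  let g : ℕ → N ⧸ Ideal.span {r} • (⊤ : Submodule R N) := fun k => Quotient.mk ⟨f k, hf k⟩
  have hg : ∀ a b, g a = g b → ∃ c ∈ N, f b - f a = r • c := by
    intro a b hab
    have := (Quotient.eq _).mp hab.symm
    rw [ideal_span_singleton_smul, mem_smul_pointwise_iff_exists] at this
    obtain ⟨c, -, hc⟩ := this
    exact ⟨c, c.2, congrArg Subtype.val hc.symm⟩
  obtain ⟨a, b, hne, hab⟩ := Finite.exists_ne_map_eq_of_infinite g
  rcases hne.lt_or_gt with h | h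
  · exact ⟨a, b, h, hg a b hab⟩
  · exact ⟨b, a, h, hg b a hab.symm⟩

end Submodule

namespace Subalgebra

variable {R B : Type*} [CommRing R] [Ring B] [Algebra R B]

/-- The localization `T⁻¹S`, realised inside `B`. -/
def localize (S : Subalgebra R B) (T : Submonoid R) : Subalgebra R B where
  carrier := {b | ∃ t ∈ T, t • b ∈ S}
  mul_mem' := by
    rintro a b ⟨s, hs, hsa⟩ ⟨t, ht, htb⟩
    refine ⟨s * t, T.mul_mem hs ht, ?_⟩
    rw [← smul_mul_smul_comm]
    exact mul_mem hsa htb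
  add_mem' := by
    rintro a b ⟨s, hs, hsa⟩ ⟨t, ht, htb⟩
    refine ⟨s * t, T.mul_mem hs ht, ?_⟩
    rw [smul_add, mul_comm, mul_smul, mul_comm, mul_smul]
    exact add_mem (S.smul_mem hsa t) (S.smul_mem htb s)
  algebraMap_mem' r := ⟨1, T.one_mem, by rw [one_smul]; exact S.algebraMap_mem r⟩

variable {S S' : Subalgebra R B} {T : Submonoid R} {b : B}

theorem mem_localize : b ∈ S.localize T ↔ ∃ t ∈ T, t • b ∈ S := Iff.rfl

theorem le_localize : S ≤ S.localize T :=
  fun b hb => ⟨1, T.one_mem, by rwa [one_smul]⟩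

theorem localize_mono (h : S ≤ S') : S.localize T ≤ S'.localize T :=
  fun _ ⟨t, ht, hb⟩ => ⟨t, ht, h hb⟩

theorem mem_localize_of_smul_mem {t : R} (ht : t ∈ T) (h : t • b ∈ S.localize T) :
    b ∈ S.localize T := by
  obtain ⟨s, hs, hsb⟩ := h
  exact ⟨s * t, T.mul_mem hs ht, by rwa [mul_smul]⟩

theorem smul_mem_localize_of_forall {r : R} (hr : ∀ m ∈ S', r • m ∈ S) (h : b ∈ S'.localize T) :
    r • b ∈ S.localize T := by
  obtain ⟨t, ht, htb⟩ := h
  exact ⟨t, ht, by rw [smul_comm]; exact hr _ htb⟩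

theorem matrix_localize {n : Type*} [Fintype n] [DecidableEq n] :
    (S.localize T).matrix (n := n) = S.matrix.localize T := by
  ext M
  constructor
  · intro hM
    obtain ⟨t, ht, hMt⟩ := (toSubmodule S).exists_smul_mem_of_forall T
      (fun p : n × n => M p.1 p.2) fun p => hM p.1 p.2
    exact ⟨t, ht, fun i j => hMt (i, j)⟩
  · rintro ⟨t, ht, hMt⟩ i j
    exact ⟨t, ht, hMt i j⟩

theorem fg_toSubmodule_matrix {n : Type*} [Fintype n] [DecidableEq n]
    (h : (toSubmodule S).FG) : (toSubmodule (S.matrix (n := n))).FG := by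
  have : toSubmodule (S.matrix (n := n)) =
      Submodule.pi Set.univ fun _ : n => Submodule.pi Set.univ fun _ : n => toSubmodule S := by
    ext M
    exact ⟨fun hM i _ j _ => hM i j, fun hM i j => hM i trivial j trivial⟩
  rw [this]
  exact Submodule.fg_pi fun _ => Submodule.fg_pi fun _ => h

theorem mem_localize_of_mul_eq_one {𝒜 ℳ : Subalgebra R B} (h𝒜ℳ : 𝒜 ≤ ℳ)
    (hℳ : (toSubmodule ℳ).FG) {r : R} [Finite (R ⧸ Ideal.span {r})]
    (hr : ∀ m ∈ ℳ, r • m ∈ 𝒜) {m n : B} (hm : m ∈ 𝒜.localize T) (hn : n ∈ ℳ.localize T)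
    (hmn : m * n = 1) : n ∈ 𝒜.localize T := by
  obtain ⟨u, hu, hum⟩ := hm
  obtain ⟨a, b, hab, c, hc, hpow⟩ :=
    hℳ.exists_lt_sub_eq_smul (r := r) (fun k => (u • m) ^ k) fun k => pow_mem (h𝒜ℳ hum) k
  obtain ⟨e, rfl⟩ := Nat.exists_eq_add_of_lt hab
  have hcancel : ∀ k l, m ^ (k + l) * n ^ l = m ^ k := fun k l => by
    rw [pow_add, mul_assoc, pow_mul_pow_eq_one l hmn, mul_one]
  have key : u ^ (a + e + 1) • m ^ e - u ^ a • n = r • (c * n ^ (a + 1)) := by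
    calc u ^ (a + e + 1) • m ^ e - u ^ a • n
        = ((u • m) ^ (a + e + 1) - (u • m) ^ a) * n ^ (a + 1) := by
          rw [smul_pow, smul_pow, sub_mul, smul_mul_assoc, smul_mul_assoc,
            show a + e + 1 = e + (a + 1) by omega, hcancel, pow_succ, ← mul_assoc,
            pow_mul_pow_eq_one a hmn, one_mul]
      _ = r • (c * n ^ (a + 1)) := by
          rw [hpow, smul_mul_assoc]
  refine mem_localize_of_smul_mem (pow_mem hu a) ?_
  rw [← sub_sub_cancel (u ^ (a + e + 1) • m ^ e) (u ^ a • n), key]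
  refine sub_mem (smul_mem _ (pow_mem (mem_localize.mpr ⟨u, hu, hum⟩) e) _) ?_
  exact smul_mem_localize_of_forall hr (mul_mem (le_localize hc) (pow_mem hn _))

end Subalgebra

open Matrix NumberField
open scoped nonZeroDivisors

theorem Finset.sum_smul_sum_smul_eq_vecMul {R M ι κ : Type*} [Ring R] [AddCommGroup M]
    [Module R M] [Fintype ι] [Fintype κ] (c : ι → R) (N : Matrix ι κ R) (v : κ → M) :
    ∑ i, c i • ∑ j, N i j • v j = ∑ j, (c ᵥ* N) j • v j := by
  simp only [Finset.smul_sum, smul_smul, vecMul, dotProduct, Finset.sum_smul]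
  exact Finset.sum_comm

theorem Subalgebra.vecMul_mem {R B ι κ : Type*} [CommRing R] [Ring B] [Algebra R B] [Fintype ι]
    {S : Subalgebra R B} {c : ι → B} {N : Matrix ι κ B} (hc : ∀ i, c i ∈ S)
    (hN : ∀ i j, N i j ∈ S) (j : κ) : (c ᵥ* N) j ∈ S :=
  sum_mem fun i _ => mul_mem (hc i) (hN i j)

instance : IsScalarTower (𝓞 E) E A where
  smul_assoc r e a := by
    rw [Algebra.smul_def r, Algebra.smul_def, Algebra.smul_def, Algebra.smul_def, map_mul,
      mul_assoc]
    rfl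

instance : IsScalarTower (𝓞 E) E V where
  smul_assoc r e v := by
    show (r • e) • v = (algebraMap (𝓞 E) E r) • e • v
    rw [Algebra.smul_def, mul_smul]

instance : IsScalarTower (𝓞 E) A V where
  smul_assoc r a v := by
    rw [← algebraMap_smul E r (a • v), ← smul_assoc, algebraMap_smul]

instance : NoZeroSMulDivisors (𝓞 E) A where
  eq_zero_or_eq_zero_of_smul_eq_zero {r a} h := by
    rw [← algebraMap_smul E r a, smul_eq_zero] at h
    exact h.imp_left fun h0 => RingOfIntegers.coe_injective (h0.trans (map_zero _).symm)

omit [NumberField E] in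
theorem coe_localize_primeCompl (𝔭 : Ideal (𝓞 E)) [𝔭.IsPrime] (S : Subalgebra (𝓞 E) A) :
    ((S.localize 𝔭.primeCompl : Subalgebra (𝓞 E) A) : Set A) = localizeA 𝔭 (S : Set A) := rfl

theorem mem_localizeV_of_mem {𝔭 : Ideal (𝓞 E)} (hp : 𝔭.IsPrime) {Y : Set V} {v : V}
    (hv : v ∈ Y) : v ∈ localizeV 𝔭 Y :=
  ⟨1, (Ideal.ne_top_iff_one 𝔭).mp hp.ne_top, by rwa [one_smul]⟩

omit [NumberField E] [Module E V] [IsScalarTower E A V] in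
theorem subset_spanSet {S : Subalgebra (𝓞 E) A} {Y : Set V} : Y ⊆ spanSet (S : Set A) Y :=
  fun v hv => ⟨1, fun _ => 1, fun _ => v, fun _ => one_mem S, fun _ => hv, by simp⟩

namespace IsOrder

variable {𝒜 ℳ : Subalgebra (𝓞 E) A}

theorem localize_nonZeroDivisors_eq_top (h𝒜 : IsOrder 𝒜) :
    𝒜.localize (𝓞 E)⁰ = ⊤ := by
  let L : Submodule E A :=
    { carrier := 𝒜.localize (𝓞 E)⁰
      add_mem' := add_mem
      zero_mem' := zero_mem _
      smul_mem' := fun e x hx => by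
        -- `algebraOEA` also makes `E` an `𝓞 E`-algebra; the standard structure must be named.
        obtain ⟨p, q, hq, rfl⟩ :=
          @IsFractionRing.div_surjective (𝓞 E) _ E _ _ RingOfIntegers.instIsFractionRing e
        refine Subalgebra.mem_localize_of_smul_mem hq ?_
        convert Subalgebra.smul_mem _ hx p using 1
        rw [← algebraMap_smul E q, ← algebraMap_smul E p, smul_smul]
        congr 1
        exact mul_div_cancel₀ _ (RingOfIntegers.coe_ne_zero_iff.mpr (nonZeroDivisors.ne_zero hq)) }
  have : Submodule.span E (𝒜 : Set A) ≤ L := Submodule.span_le.mpr Subalgebra.le_localize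
  rw [h𝒜.2, top_le_iff] at this
  exact eq_top_iff.mpr fun x _ => (this ▸ Submodule.mem_top : x ∈ L)

theorem exists_conductor (h𝒜 : IsOrder 𝒜) (hℳ : (Subalgebra.toSubmodule ℳ).FG) :
    ∃ r : 𝓞 E, r ≠ 0 ∧ ∀ m ∈ ℳ, r • m ∈ 𝒜 := by
  obtain ⟨r, hr, h⟩ := hℳ.exists_smul_mem_of_forall (Subalgebra.toSubmodule 𝒜) (𝓞 E)⁰
    fun x _ => (h𝒜.localize_nonZeroDivisors_eq_top ▸ Algebra.mem_top : x ∈ 𝒜.localize _)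
  exact ⟨r, nonZeroDivisors.ne_zero hr, h⟩

theorem mem_matrix_localize_of_mul_eq_one (h𝒜 : IsOrder 𝒜) (hℳ : (Subalgebra.toSubmodule ℳ).FG)
    (h𝒜ℳ : 𝒜 ≤ ℳ) {T : Submonoid (𝓞 E)} {n : Type*} [Fintype n] [DecidableEq n]
    {M N : Matrix n n A} (hM : M ∈ (𝒜.localize T).matrix) (hN : N ∈ (ℳ.localize T).matrix)
    (hMN : M * N = 1) : N ∈ (𝒜.localize T).matrix := by
  obtain ⟨r, hr0, hr⟩ := h𝒜.exists_conductor hℳ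
  have : Finite (𝓞 E ⧸ Ideal.span {r}) :=
    Ideal.finiteQuotientOfFreeOfNeBot _ (by rwa [ne_eq, Ideal.span_singleton_eq_bot])
  -- `algebraOEA` would otherwise supply a second `𝓞 E`-algebra structure on the matrices.
  let _ : Algebra (𝓞 E) (Matrix n n A) := Matrix.instAlgebra
  rw [Subalgebra.matrix_localize] at hM hN ⊢
  exact Subalgebra.mem_localize_of_mul_eq_one (fun P (hP : P ∈ 𝒜.matrix) i j => h𝒜ℳ (hP i j))
    (Subalgebra.fg_toSubmodule_matrix hℳ) (fun P (hP : P ∈ ℳ.matrix) i j => hr _ (hP i j))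
    hM hN hMN

end IsOrder

namespace IsBasisOf

variable {S : Subalgebra (𝓞 E) A} {Y : Set V} {d : ℕ} {α : Fin d → V}

omit [NumberField E] [Module E V] [IsScalarTower E A V] in
theorem eq_of_sum_smul_eq (h : IsBasisOf (S : Set A) Y α) {f g : Fin d → A}
    (hf : ∀ i, f i ∈ S) (hg : ∀ i, g i ∈ S) (hfg : ∑ i, f i • α i = ∑ i, g i • α i) :
    f = g :=
  funext fun i => sub_eq_zero.mp <| h.2.2 (f - g) (fun i => sub_mem (hf i) (hg i))
    (by simp only [Pi.sub_apply, sub_smul, Finset.sum_sub_distrib, hfg, sub_self]) i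

theorem eq_zero_of_smul_mem (h : IsBasisOf (S : Set A) Y α) {s : 𝓞 E} (hs : s ≠ 0)
    {lam : Fin d → A} (hlam : ∀ i, s • lam i ∈ S) (hsum : ∑ i, lam i • α i = 0) (i : Fin d) :
    lam i = 0 := by
  have := h.2.2 (fun i => s • lam i) hlam
    (by simp_rw [smul_assoc, ← Finset.smul_sum, hsum, smul_zero]) i
  exact (smul_eq_zero.mp this).resolve_left hs

theorem localize {𝔭 : Ideal (𝓞 E)} (hp : 𝔭.IsPrime) (h : IsBasisOf (S : Set A) Y α) :
    IsBasisOf (localizeA 𝔭 (S : Set A)) (localizeV 𝔭 Y) α := by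
  rw [← coe_localize_primeCompl]
  refine ⟨fun lam hlam => ?_, fun y ⟨t, ht, hty⟩ => ?_, fun lam hlam hsum => ?_⟩
  · obtain ⟨s, hs, hsl⟩ := (Subalgebra.toSubmodule S).exists_smul_mem_of_forall _ lam hlam
    refine ⟨s, hs, ?_⟩
    simp_rw [Finset.smul_sum, ← smul_assoc]
    exact h.1 _ hsl
  · obtain ⟨μ, hμ, hμy⟩ := h.2.1 _ hty
    have ht0 : algebraMap (𝓞 E) E t ≠ 0 :=
      RingOfIntegers.coe_ne_zero_iff.mpr (by rintro rfl; exact ht 𝔭.zero_mem)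
    refine ⟨fun i => (algebraMap (𝓞 E) E t)⁻¹ • μ i, fun i => ⟨t, ht, ?_⟩, ?_⟩
    · rw [← algebraMap_smul E t, smul_inv_smul₀ ht0]
      exact hμ i
    · simp_rw [smul_assoc, ← Finset.smul_sum, ← hμy, ← algebraMap_smul E t y,
        inv_smul_smul₀ ht0]
  · obtain ⟨s, hs, hsl⟩ := (Subalgebra.toSubmodule S).exists_smul_mem_of_forall _ lam hlam
    exact h.eq_zero_of_smul_mem (by rintro rfl; exact hs 𝔭.zero_mem) hsl hsum

variable {𝒜 ℳ : Subalgebra (𝓞 E) A}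

theorem extendScalars (h𝒜 : IsOrder 𝒜) (hℳ : (Subalgebra.toSubmodule ℳ).FG) (h𝒜ℳ : 𝒜 ≤ ℳ)
    (h : IsBasisOf (𝒜 : Set A) Y α) (hαY : ∀ i, α i ∈ Y) :
    IsBasisOf (ℳ : Set A) (spanSet (ℳ : Set A) Y) α := by
  refine ⟨fun lam hlam => ⟨d, lam, α, hlam, hαY, rfl⟩, ?_, fun lam hlam hsum => ?_⟩
  · rintro y ⟨m, μ, x, hμ, hx, rfl⟩
    choose c hc hxc using fun j => h.2.1 (x j) (hx j)
    refine ⟨μ ᵥ* Matrix.of c, Subalgebra.vecMul_mem hμ fun j i => h𝒜ℳ (hc j i), ?_⟩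
    simp_rw [hxc]
    exact Finset.sum_smul_sum_smul_eq_vecMul μ (Matrix.of c) α
  · obtain ⟨r, hr0, hr⟩ := h𝒜.exists_conductor hℳ
    exact h.eq_zero_of_smul_mem hr0 (fun i => hr _ (hlam i)) hsum

theorem coeff_mem_localizeA (h𝒜 : IsOrder 𝒜) (hℳ : (Subalgebra.toSubmodule ℳ).FG)
    (h𝒜ℳ : 𝒜 ≤ ℳ) (hαY : ∀ i, α i ∈ Y) (h : IsBasisOf (ℳ : Set A) (spanSet (ℳ : Set A) Y) α)
    {𝔭 : Ideal (𝓞 E)} (hp : 𝔭.IsPrime)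
    (hfree : IsFreeOfRank (localizeA 𝔭 (𝒜 : Set A)) (localizeV 𝔭 Y) d)
    {lam : Fin d → A} (hlam : ∀ i, lam i ∈ ℳ) (hY : ∑ i, lam i • α i ∈ Y) (i : Fin d) :
    lam i ∈ localizeA 𝔭 (𝒜 : Set A) := by
  obtain ⟨β, hβY, hβ⟩ := hfree
  have hα := h.localize hp
  rw [← coe_localize_primeCompl] at hβ hα ⊢
  choose M hM hαβ using fun i => hβ.2.1 (α i) (mem_localizeV_of_mem hp (hαY i))
  choose N hN hβα using fun j => hα.2.1 (β j) <| by
    obtain ⟨t, ht, htβ⟩ := hβY j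
    exact ⟨t, ht, subset_spanSet htβ⟩
  have hexpand : ∀ c : Fin d → A, ∑ j, c j • β j = ∑ k, (c ᵥ* Matrix.of N) k • α k := by
    intro c
    simp_rw [hβα]
    exact Finset.sum_smul_sum_smul_eq_vecMul c (Matrix.of N) α
  have hMN : Matrix.of M * Matrix.of N = 1 := by
    ext i k
    refine congrFun (hα.eq_of_sum_smul_eq (f := M i ᵥ* Matrix.of N) (g := (1 : Matrix _ _ A) i)
      (Subalgebra.vecMul_mem (fun j => Subalgebra.localize_mono h𝒜ℳ (hM i j)) hN)
      (fun k => one_mem ((ℳ.localize 𝔭.primeCompl).matrix (n := Fin d)) i k) ?_) k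
    rw [← hexpand, ← hαβ i]
    simp [Matrix.one_apply]
  have hNA := h𝒜.mem_matrix_localize_of_mul_eq_one hℳ h𝒜ℳ (M := Matrix.of M) hM hN hMN
  obtain ⟨c, hc, hcβ⟩ := hβ.2.1 _ (mem_localizeV_of_mem hp hY)
  have hlamc : lam = c ᵥ* Matrix.of N :=
    hα.eq_of_sum_smul_eq (fun k => Subalgebra.le_localize (hlam k))
      (Subalgebra.vecMul_mem (fun j => Subalgebra.localize_mono h𝒜ℳ (hc j)) hN)
      (by rw [← hexpand, ← hcβ])
  rw [hlamc]
  exact Subalgebra.vecMul_mem hc hNA i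

end IsBasisOf

theorem IsFreeOfRank.isLocallyFreeOfRank {S : Subalgebra (𝓞 E) A} {Y : Set V} {d : ℕ}
    (h : IsFreeOfRank (S : Set A) Y d) : IsLocallyFreeOfRank (E := E) (S : Set A) Y d :=
  fun _ hp _ =>
    let ⟨α, hαY, hα⟩ := h
    ⟨α, fun i => mem_localizeV_of_mem hp (hαY i), hα.localize hp⟩

theorem IsBasisOf.of_isLocallyFreeOfRank {𝒜 ℳ : Subalgebra (𝓞 E) A} (h𝒜 : IsOrder 𝒜)
    (hℳ : (Subalgebra.toSubmodule ℳ).FG) (h𝒜ℳ : 𝒜 ≤ ℳ) {X : Submodule (𝓞 E) V}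
    (hX : ∀ a ∈ 𝒜, ∀ x ∈ X, a • x ∈ X) {d : ℕ} {α : Fin d → V} (hαX : ∀ i, α i ∈ X)
    (hloc : IsLocallyFreeOfRank (E := E) (𝒜 : Set A) (X : Set V) d)
    (h : IsBasisOf (ℳ : Set A) (spanSet (ℳ : Set A) (X : Set V)) α) :
    IsBasisOf (𝒜 : Set A) (X : Set V) α := by
  refine ⟨fun lam hlam => X.sum_mem fun i _ => hX _ (hlam i) _ (hαX i), fun y hy => ?_,
    fun lam hlam => h.2.2 lam fun i => h𝒜ℳ (hlam i)⟩
  obtain ⟨lam, hlam, rfl⟩ := h.2.1 y (subset_spanSet hy)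
  refine ⟨lam, fun i => (Subalgebra.toSubmodule 𝒜).mem_of_forall_isMaximal fun 𝔪 h𝔪 => ?_, rfl⟩
  have h𝔪0 : 𝔪 ≠ ⊥ := Ring.ne_bot_of_isMaximal_of_not_isField h𝔪 (RingOfIntegers.not_isField E)
  exact h.coeff_mem_localizeA h𝒜 hℳ h𝒜ℳ hαX h𝔪.isPrime (hloc 𝔪 h𝔪.isPrime h𝔪0) hlam hy i

theorem freeness_criterion
    (𝒜 ℳ : Subalgebra (𝓞 E) A) (h𝒜 : IsOrder 𝒜) (hℳ : IsMaximalOrder ℳ) (h𝒜ℳ : 𝒜 ≤ ℳ)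
    (X : Submodule (𝓞 E) V) (hX : IsALattice 𝒜 X) (d : ℕ) :
    (IsFreeOfRank (𝒜 : Set A) (X : Set V) d ↔
      IsLocallyFreeOfRank (E := E) (𝒜 : Set A) (X : Set V) d ∧
        ∃ α : Fin d → V, (∀ i, α i ∈ X) ∧
          IsBasisOf (ℳ : Set A) (spanSet (ℳ : Set A) (X : Set V)) α) ∧
    (∀ α : Fin d → V, (∀ i, α i ∈ X) →
      IsLocallyFreeOfRank (E := E) (𝒜 : Set A) (X : Set V) d →
      IsBasisOf (ℳ : Set A) (spanSet (ℳ : Set A) (X : Set V)) α →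
      IsBasisOf (𝒜 : Set A) (X : Set V) α) := by
  refine ⟨⟨fun hfree => ⟨hfree.isLocallyFreeOfRank, ?_⟩, ?_⟩, fun α hαX hloc hα =>
    hα.of_isLocallyFreeOfRank h𝒜 hℳ.1.1 h𝒜ℳ hX.2.2 hαX hloc⟩
  · obtain ⟨γ, hγX, hγ⟩ := hfree
    exact ⟨γ, hγX, hγ.extendScalars h𝒜 hℳ.1.1 h𝒜ℳ hγX⟩
  · rintro ⟨hloc, α, hαX, hα⟩
    exact ⟨α, hαX, hα.of_isLocallyFreeOfRank h𝒜 hℳ.1.1 h𝒜ℳ hX.2.2 hαX hloc⟩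

end
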